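/- Let the Stokes matrix R of a qubit channel have 2×2 upper-left block with singular values d_z, d_x, and write its singular value decomposition as B·diag(d_z,d_x)·A with A, B rotation matrices. Then for the rows Ã_z = (d_z A_{zz}, d_x A_{zx}) and Ã_x = (d_z A_{xz}, d_x A_{xx}) one has h((1+‖Ã_z‖)/2) + h((1+‖Ã_x‖)/2) ≥ h((1+d_z)/2) + h((1+d_x)/2), where ‖Ã_z‖ = √(d_z²A_{zz}² + d_x²A_{zx}²), provided 0 ≤ d_z, d_x ≤ 1. -/

import Mathlib

/-!
Put `φ x = h ((1 + √x) / 2)`, `c = A_zz²`, `s = A_zx²`. Orthogonality of `A` gives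
`A_xz² = s` and `A_xx² = c`, so the claim reads
`φ (d_z²) + φ (d_x²) ≤ φ (c d_z² + s d_x²) + φ (s d_z² + c d_x²)` with `c + s = 1`: the sum of two
concavity inequalities for `φ`. In nats, `φ' x = -artanh (√x) / (2√x)`, and `artanh u / u` increases
on `(0, 1)` because it is the secant slope from `0` of `artanh`, which is convex on `[0, 1)`.
-/

/-- The binary entropy function (base 2). -/
noncomputable def binEnt (p : ℝ) : ℝ :=
  -(p * Real.logb 2 p) - (1 - p) * Real.logb 2 (1 - p)

open Real Set

lemma binEnt_eq_binEntropy_div_log_two (p : ℝ) : binEnt p = binEntropy p / log 2 := by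
  unfold binEnt binEntropy logb
  rw [log_inv, log_inv]
  ring

lemma sq_eq_sq_of_orthonormal_rows {R : Type*} [CommRing R] {a b c d : R}
    (h₁ : a ^ 2 + b ^ 2 = 1) (h₂ : c ^ 2 + d ^ 2 = 1) (horth : a * c + b * d = 0) :
    c ^ 2 = b ^ 2 ∧ d ^ 2 = a ^ 2 :=
  ⟨by linear_combination -c ^ 2 * h₁ + b ^ 2 * h₂ + (a * c - b * d) * horth,
    by linear_combination -d ^ 2 * h₁ + a ^ 2 * h₂ + (b * d - a * c) * horth⟩

lemma ConcaveOn.add_le_map_combo_add_map_swap_combo {𝕜 E β : Type*} [Semiring 𝕜]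
    [PartialOrder 𝕜] [AddCommMonoid E] [AddCommMonoid β] [PartialOrder β]
    [IsOrderedAddMonoid β] [Module 𝕜 E] [Module 𝕜 β] {s : Set E} {f : E → β}
    (hf : ConcaveOn 𝕜 s f) {x y : E} (hx : x ∈ s) (hy : y ∈ s) {a b : 𝕜}
    (ha : 0 ≤ a) (hb : 0 ≤ b) (hab : a + b = 1) :
    f x + f y ≤ f (a • x + b • y) + f (b • x + a • y) := by
  have hba : b + a = 1 := by rwa [add_comm]
  calc f x + f y = (a • f x + b • f y) + (b • f x + a • f y) := by
        rw [add_add_add_comm, ← add_smul, ← add_smul, hab, hba, one_smul, one_smul]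
    _ ≤ f (a • x + b • y) + f (b • x + a • y) :=
        add_le_add (hf.2 hx hy ha hb hab) (hf.2 hx hy hb ha hba)

lemma hasDerivAt_log_one_add_sub_log_one_sub {u : ℝ} (hu : u ∈ Ioo (-1) 1) :
    HasDerivAt (fun u => log (1 + u) - log (1 - u)) (2 / (1 - u ^ 2)) u := by
  have hplus : 1 + u ≠ 0 := by linarith [hu.1]
  have hminus : 1 - u ≠ 0 := by linarith [hu.2]
  refine ((((hasDerivAt_id' u).const_add 1).log hplus).sub
    (((hasDerivAt_id' u).const_sub 1).log hminus)).congr_deriv ?_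
  rw [show (1 : ℝ) - u ^ 2 = (1 + u) * (1 - u) by ring]
  field_simp
  ring

lemma convexOn_log_one_add_sub_log_one_sub :
    ConvexOn ℝ (Ico 0 1) (fun u => log (1 + u) - log (1 - u)) := by
  have hderiv : ∀ u ∈ Ioo (0 : ℝ) 1,
      HasDerivAt (fun u => log (1 + u) - log (1 - u)) (2 / (1 - u ^ 2)) u :=
    fun u hu => hasDerivAt_log_one_add_sub_log_one_sub ⟨by linarith [hu.1], hu.2⟩
  refine MonotoneOn.convexOn_of_deriv (convex_Ico 0 1) ?_ ?_ ?_
  · refine ContinuousOn.sub (ContinuousOn.log (by fun_prop) ?_) (ContinuousOn.log (by fun_prop) ?_)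
    <;> intro u hu <;> linarith [hu.1, hu.2]
  · rw [interior_Ico]
    exact fun u hu => (hderiv u hu).differentiableAt.differentiableWithinAt
  · rw [interior_Ico]
    intro u hu v hv huv
    rw [(hderiv u hu).deriv, (hderiv v hv).deriv]
    have hv_sq : 0 < 1 - v ^ 2 := by nlinarith [hv.1, hv.2]
    gcongr
    exact hu.1.le

lemma monotoneOn_log_one_add_sub_log_one_sub_div :
    MonotoneOn (fun u => (log (1 + u) - log (1 - u)) / u) (Ioo 0 1) := by
  intro u hu v hv huv
  simpa using convexOn_log_one_add_sub_log_one_sub.secant_mono (left_mem_Ico.2 one_pos)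
    (Ioo_subset_Ico_self hu) (Ioo_subset_Ico_self hv) hu.1.ne' hv.1.ne' huv

lemma sqrt_mem_Ioo_zero_one {x : ℝ} (hx : x ∈ Ioo 0 1) : √x ∈ Ioo 0 1 :=
  ⟨sqrt_pos.2 hx.1, by rw [sqrt_lt' one_pos, one_pow]; exact hx.2⟩

lemma hasDerivAt_binEntropy_one_add_sqrt_div_two {x : ℝ} (hx : x ∈ Ioo 0 1) :
    HasDerivAt (fun x => binEntropy ((1 + √x) / 2))
      (-((log (1 + √x) - log (1 - √x)) / √x) / 4) x := by
  obtain ⟨hs₀, hs₁⟩ := sqrt_mem_Ioo_zero_one hx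
  have hp : HasDerivAt (fun x => (1 + √x) / 2) (1 / (2 * √x) / 2) x :=
    ((hasDerivAt_sqrt hx.1.ne').const_add 1).div_const 2
  refine ((hasDerivAt_binEntropy (by positivity) (by linarith)).comp x hp).congr_deriv ?_
  rw [show 1 - (1 + √x) / 2 = (1 - √x) / 2 by ring, log_div (by linarith) two_ne_zero,
    log_div (by positivity) two_ne_zero]
  field_simp
  ring

lemma concaveOn_binEntropy_one_add_sqrt_div_two :
    ConcaveOn ℝ (Icc 0 1) (fun x => binEntropy ((1 + √x) / 2)) := by
  refine AntitoneOn.concaveOn_of_deriv (convex_Icc 0 1) (by fun_prop) ?_ ?_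
  · rw [interior_Icc]
    exact fun x hx =>
      (hasDerivAt_binEntropy_one_add_sqrt_div_two hx).differentiableAt.differentiableWithinAt
  · rw [interior_Icc]
    intro x hx y hy hxy
    rw [(hasDerivAt_binEntropy_one_add_sqrt_div_two hx).deriv,
      (hasDerivAt_binEntropy_one_add_sqrt_div_two hy).deriv]
    exact div_le_div_of_nonneg_right (neg_le_neg (monotoneOn_log_one_add_sub_log_one_sub_div
      (sqrt_mem_Ioo_zero_one hx) (sqrt_mem_Ioo_zero_one hy) (sqrt_le_sqrt hxy))) zero_le_four

theorem binEnt_rotated_singular_values_general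
    (Azz Azx Axz Axx dz dx : ℝ)
    (hrow1 : Azz ^ 2 + Azx ^ 2 = 1) (hrow2 : Axz ^ 2 + Axx ^ 2 = 1)
    (horth : Azz * Axz + Azx * Axx = 0)
    (hdz : dz ∈ Set.Icc (0 : ℝ) 1) (hdx : dx ∈ Set.Icc (0 : ℝ) 1) :
    binEnt ((1 + dz) / 2) + binEnt ((1 + dx) / 2) ≤
      binEnt ((1 + Real.sqrt (dz ^ 2 * Azz ^ 2 + dx ^ 2 * Azx ^ 2)) / 2) +
        binEnt ((1 + Real.sqrt (dz ^ 2 * Axz ^ 2 + dx ^ 2 * Axx ^ 2)) / 2) := by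
  obtain ⟨hxz, hxx⟩ := sq_eq_sq_of_orthonormal_rows hrow1 hrow2 horth
  have hsq_mem : ∀ d ∈ Icc (0 : ℝ) 1, d ^ 2 ∈ Icc (0 : ℝ) 1 :=
    fun d hd => ⟨sq_nonneg d, pow_le_one₀ hd.1 hd.2⟩
  have key := concaveOn_binEntropy_one_add_sqrt_div_two.add_le_map_combo_add_map_swap_combo
    (hsq_mem dz hdz) (hsq_mem dx hdx) (sq_nonneg Azz) (sq_nonneg Azx) hrow1
  simp only [smul_eq_mul, sqrt_sq hdz.1, sqrt_sq hdx.1] at key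
  simp only [binEnt_eq_binEntropy_div_log_two, ← add_div, hxz, hxx]
  refine div_le_div_of_nonneg_right ?_ (log_pos one_lt_two).le
  convert key using 6 <;> ring

/-- For a 2×2 rotation matrix `A` and singular values `0 ≤ d_z, d_x ≤ 1`,
with rows `Ã_z = (d_z A_zz, d_x A_zx)`, `Ã_x = (d_z A_xz, d_x A_xx)`:
`h((1+‖Ã_z‖)/2) + h((1+‖Ã_x‖)/2) ≥ h((1+d_z)/2) + h((1+d_x)/2)`. -/
theorem binEnt_rotated_singular_values
    (Azz Azx Axz Axx dz dx : ℝ)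
    (hrow1 : Azz ^ 2 + Azx ^ 2 = 1) (hrow2 : Axz ^ 2 + Axx ^ 2 = 1)
    (horth : Azz * Axz + Azx * Axx = 0) (hdet : Azz * Axx - Azx * Axz = 1)
    (hdz : dz ∈ Set.Icc (0 : ℝ) 1) (hdx : dx ∈ Set.Icc (0 : ℝ) 1) :
    binEnt ((1 + dz) / 2) + binEnt ((1 + dx) / 2) ≤
      binEnt ((1 + Real.sqrt (dz ^ 2 * Azz ^ 2 + dx ^ 2 * Azx ^ 2)) / 2) +
        binEnt ((1 + Real.sqrt (dz ^ 2 * Axz ^ 2 + dx ^ 2 * Axx ^ 2)) / 2) :=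
  binEnt_rotated_singular_values_general Azz Azx Axz Axx dz dx hrow1 hrow2 horth hdz hdx
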